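/- arXiv:2011.07244 — 3 statements merged into one kernel-verified Lean document; each statement's English description precedes it below -/
import Mathlib

section
/- Let R ∈ [0.21132, 0.22803] and a = (1−R)². Define G(x) = sin²(x) + cos(x)·√(a − sin²(x)). Then for all x ∈ [0, π/6], 1 − R − R²x²/(2(1−R)) − 0.05 x⁴ ≤ G(x) ≤ 1 − R − R²x²/(2(1−R)) − 0.02 x⁴. -/
open Real Set

/-!
With `s = sin² x` we have `cos x · √(a - s) = √((1 - s)((1 - R)² - s))`, so both bounds compare
`s + √((1 - s)((1 - R)² - s))` with `T = 1 - R - R²x²/(2(1 - R)) - c x⁴`. After squaring,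
`4(1 - R)² ((1 - s)((1 - R)² - s) - (T - s)²)` is affine in `u = x² - s` with nonnegative slope,
and the Taylor bounds for `sin` confine `u` to `[0.3 x⁴, x⁴/3]`. At the relevant endpoint
`u = θ x⁴` this quantity is `x⁴` times a polynomial in `R` and `x²` whose sign is fixed on the
given ranges.
-/

lemma sq_sub_sin_sq_le {x : ℝ} (hx : 0 ≤ x) : x ^ 2 - sin x ^ 2 ≤ x ^ 4 / 3 := by
  have hsub : x - sin x ≤ x ^ 3 / 6 := by linarith [sin_ge_sub_cube hx]
  have hadd : 0 ≤ x + sin x := by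
    linarith [neg_abs_le (sin x), abs_sin_le_abs (x := x), abs_of_nonneg hx]
  nlinarith [mul_le_mul_of_nonneg_right hsub hadd, sin_le hx]

lemma le_sq_sub_sin_sq {x : ℝ} (hx₀ : 0 ≤ x) (hx : x ≤ 0.7) :
    0.3 * x ^ 4 ≤ x ^ 2 - sin x ^ 2 := by
  have htaylor := sin_bound (x := x) (by rw [abs_of_nonneg hx₀]; linarith)
  rw [abs_of_nonneg hx₀] at htaylor
  have hsub : x ^ 3 / 6 - x ^ 5 / 100 ≤ x - sin x := by
    linarith [le_abs_self (sin x - (x - x ^ 3 / 6))]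
  have hadd : 2 * x - x ^ 3 / 6 ≤ x + sin x := by linarith [sin_ge_sub_cube hx₀]
  have hx2 : x ^ 2 ≤ 0.49 := by nlinarith
  have hsub₀ : 0 ≤ x ^ 3 / 6 - x ^ 5 / 100 := by
    have : x ^ 5 = x ^ 3 * x ^ 2 := by ring
    nlinarith [pow_nonneg hx₀ 3]
  have hadd₀ : 0 ≤ 2 * x - x ^ 3 / 6 := by nlinarith
  calc 0.3 * x ^ 4 ≤ (x ^ 3 / 6 - x ^ 5 / 100) * (2 * x - x ^ 3 / 6) := by
        nlinarith [mul_nonneg (pow_nonneg hx₀ 4) (sq_nonneg x)]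
    _ ≤ (x - sin x) * (x + sin x) := mul_le_mul hsub hadd hadd₀ (by linarith)
    _ = x ^ 2 - sin x ^ 2 := by ring

lemma cos_mul_sqrt_sub_sin_sq {x : ℝ} (hx : 0 ≤ cos x) (a : ℝ) :
    cos x * √(a - sin x ^ 2) = √((1 - sin x ^ 2) * (a - sin x ^ 2)) := by
  rw [← cos_sq', sqrt_mul (sq_nonneg _), sqrt_sq hx]

/-- `4(1 - R)² ((1 - s)((1 - R)² - s) - (T - s)²) / X²` at `s = X - θ X²`,
where `T = 1 - R - R² X / (2(1 - R)) - c X²`. -/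
def defectPoly (R X θ c : ℝ) : ℝ :=
  4 * (1 - R) ^ 2 * R ^ 2 * θ + 8 * c * (1 - R) ^ 3
    - 4 * (1 - R) * (1 - θ * X) * (R ^ 2 + 2 * c * (1 - R) * X)
    - (R ^ 2 + 2 * c * (1 - R) * X) ^ 2

lemma four_mul_sq_mul_sub_sub_sq_eq (R x s θ c : ℝ) (hR : R ≠ 1) :
    4 * (1 - R) ^ 2 * ((1 - s) * ((1 - R) ^ 2 - s)
        - (1 - R - R ^ 2 * x ^ 2 / (2 * (1 - R)) - c * x ^ 4 - s) ^ 2)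
      = 4 * (1 - R) * ((1 - R) * R ^ 2 + R ^ 2 * x ^ 2 + 2 * c * (1 - R) * x ^ 4)
          * (x ^ 2 - s - θ * x ^ 4) + x ^ 4 * defectPoly R (x ^ 2) θ c := by
  have : 1 - R ≠ 0 := sub_ne_zero.2 hR.symm
  unfold defectPoly
  field_simp
  ring

section Ranges

variable {R X : ℝ}

lemma defectPoly_nonneg (hR : R ∈ Icc (0.21132 : ℝ) 0.22803) (hX₀ : 0 ≤ X) (hX : X ≤ 0.3) :
    0 ≤ defectPoly R X 0.3 0.05 := by
  obtain ⟨hR₁, hR₂⟩ := hR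
  unfold defectPoly
  nlinarith [mul_nonneg hX₀ (sub_nonneg.2 hX), mul_nonneg (sub_nonneg.2 hR₁) (sub_nonneg.2 hR₂),
    mul_nonneg (sub_nonneg.2 hR₁) (sub_nonneg.2 hX), mul_nonneg (sub_nonneg.2 hR₂) (sub_nonneg.2 hX),
    mul_nonneg (sub_nonneg.2 hR₁) hX₀, mul_nonneg (sub_nonneg.2 hR₂) hX₀]

lemma defectPoly_nonpos (hR : R ∈ Icc (0.21132 : ℝ) 0.22803) (hX₀ : 0 ≤ X) (hX : X ≤ 0.3) :
    defectPoly R X (1 / 3) 0.02 ≤ 0 := by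
  obtain ⟨hR₁, hR₂⟩ := hR
  unfold defectPoly
  nlinarith [mul_nonneg hX₀ (sub_nonneg.2 hX), mul_nonneg (sub_nonneg.2 hR₁) (sub_nonneg.2 hR₂),
    mul_nonneg (sub_nonneg.2 hR₁) (sub_nonneg.2 hX), mul_nonneg (sub_nonneg.2 hR₂) (sub_nonneg.2 hX),
    mul_nonneg (sub_nonneg.2 hR₁) hX₀, mul_nonneg (sub_nonneg.2 hR₂) hX₀]

end Ranges

section AlgebraicBounds

variable {R x s : ℝ}

lemma le_add_sqrt_mul_sub (hR : R ∈ Icc (0.21132 : ℝ) 0.22803) (hx : x ^ 2 ≤ 0.3)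
    (hs : 0.3 * x ^ 4 ≤ x ^ 2 - s) :
    1 - R - R ^ 2 * x ^ 2 / (2 * (1 - R)) - 0.05 * x ^ 4
      ≤ s + √((1 - s) * ((1 - R) ^ 2 - s)) := by
  have hb : 0 < 1 - R := by linarith [hR.2]
  have hsq : (1 - R - R ^ 2 * x ^ 2 / (2 * (1 - R)) - 0.05 * x ^ 4 - s) ^ 2
      ≤ (1 - s) * ((1 - R) ^ 2 - s) := by
    have h : 0 ≤ 4 * (1 - R) ^ 2 * ((1 - s) * ((1 - R) ^ 2 - s)
        - (1 - R - R ^ 2 * x ^ 2 / (2 * (1 - R)) - 0.05 * x ^ 4 - s) ^ 2) := by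
      rw [four_mul_sq_mul_sub_sub_sq_eq R x s 0.3 0.05 (by linarith : R < 1).ne]
      exact add_nonneg (mul_nonneg (by positivity) (by linarith))
        (mul_nonneg (by positivity) (defectPoly_nonneg hR (sq_nonneg x) hx))
    exact sub_nonneg.1 (nonneg_of_mul_nonneg_right h (by positivity))
  linarith [le_abs_self (1 - R - R ^ 2 * x ^ 2 / (2 * (1 - R)) - 0.05 * x ^ 4 - s),
    abs_le_sqrt hsq]

lemma add_sqrt_mul_sub_le (hR : R ∈ Icc (0.21132 : ℝ) 0.22803) (hx : x ^ 2 ≤ 0.3)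
    (hs₀ : s ≤ x ^ 2) (hs : x ^ 2 - s ≤ x ^ 4 / 3) :
    s + √((1 - s) * ((1 - R) ^ 2 - s))
      ≤ 1 - R - R ^ 2 * x ^ 2 / (2 * (1 - R)) - 0.02 * x ^ 4 := by
  obtain ⟨hR₁, hR₂⟩ := hR
  have hb : 0 < 1 - R := by linarith
  have hT : 0 ≤ 1 - R - R ^ 2 * x ^ 2 / (2 * (1 - R)) - 0.02 * x ^ 4 - s := by
    have hR_sq : 0 ≤ (1 - R) / 5 - R ^ 2 := by nlinarith
    have : R ^ 2 * x ^ 2 / (2 * (1 - R)) ≤ x ^ 2 / 10 := by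
      rw [div_le_iff₀ (by positivity)]
      nlinarith [mul_nonneg (sq_nonneg x) hR_sq]
    nlinarith [sq_nonneg x]
  have hsq : (1 - s) * ((1 - R) ^ 2 - s)
      ≤ (1 - R - R ^ 2 * x ^ 2 / (2 * (1 - R)) - 0.02 * x ^ 4 - s) ^ 2 := by
    have h : 4 * (1 - R) ^ 2 * ((1 - s) * ((1 - R) ^ 2 - s)
        - (1 - R - R ^ 2 * x ^ 2 / (2 * (1 - R)) - 0.02 * x ^ 4 - s) ^ 2) ≤ 0 := by
      rw [four_mul_sq_mul_sub_sub_sq_eq R x s (1 / 3) 0.02 (by linarith : R < 1).ne]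
      exact add_nonpos (mul_nonpos_of_nonneg_of_nonpos (by positivity) (by linarith))
        (mul_nonpos_of_nonneg_of_nonpos (by positivity)
          (defectPoly_nonpos ⟨hR₁, hR₂⟩ (sq_nonneg x) hx))
    exact sub_nonpos.1 (nonpos_of_mul_nonpos_right h (by positivity))
  linarith [(sqrt_le_left hT).2 hsq]

end AlgebraicBounds

/-- Bounds for `G(x) = sin²x + cos x √(a − sin²x)`, `a = (1−R)²`,
for `R ∈ [0.21132, 0.22803]` and `x ∈ [0, π/6]`. -/
theorem G_bounds (R : ℝ) (hR : R ∈ Set.Icc (0.21132 : ℝ) 0.22803)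
    (a : ℝ) (ha : a = (1 - R) ^ 2)
    (G : ℝ → ℝ)
    (hG : ∀ x, G x = Real.sin x ^ 2 + Real.cos x * Real.sqrt (a - Real.sin x ^ 2)) :
    ∀ x ∈ Set.Icc (0 : ℝ) (Real.pi / 6),
      1 - R - R ^ 2 * x ^ 2 / (2 * (1 - R)) - 0.05 * x ^ 4 ≤ G x ∧
      G x ≤ 1 - R - R ^ 2 * x ^ 2 / (2 * (1 - R)) - 0.02 * x ^ 4 := by
  rintro x ⟨hx₀, hx⟩
  have hx' : x ≤ 0.53 := by linarith [pi_lt_d2]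
  have hx2 : x ^ 2 ≤ 0.3 := by nlinarith
  have hcos : 0 ≤ cos x := cos_nonneg_of_mem_Icc ⟨by linarith [pi_pos], by linarith [pi_pos]⟩
  rw [hG, cos_mul_sqrt_sub_sin_sq hcos, ha]
  exact ⟨le_add_sqrt_mul_sub hR hx2 (le_sq_sub_sin_sq hx₀ (by linarith)),
    add_sqrt_mul_sub_le hR hx2 sin_sq_le_sq (sq_sub_sin_sq_le hx₀)⟩
end

section
/- Let Ω be a Reuleaux polygon of width 1 with inradius r, centered at the origin of its incircle. Suppose M_1, M_2 are contact points of the incircle lying on arcs γ_1 (centered at P_1) and γ_{2m} (centered at P_{2m}) respectively, with t the polar angle of M_2 and the sector [t, π/2] (of length u = π/2 − t) containing vertex meeting angles t < x_1 < … < x_{2m−1} < π/2. Then r = 1 − (∑_{k=1}^{2m−1} (−1)^{k−1} cos x_k)/sin u. -/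
open Real Finset

/-!
Summing the edge relations `P (k - 1) = P k + e^{i β_k}` telescopes to
`P₁ = P_{2m} + ∑_{k=2}^{2m} e^{i β_k}`. Its real part reads
`0 = -(1 - r) sin u + ∑_{k=2}^{2m} cos β_k`, and reversing the order of summation turns
`∑ cos β_k` into the alternating sum of the `cos x_k`, the sign coming from
`cos (β - π) = -cos β` at the even-indexed angles.
-/

theorem eq_add_sum_Ioc_of_pred_eq_add {G : Type*} [AddCommMonoid G] {P v : ℕ → G}
    {a n : ℕ} (han : a ≤ n) (hrec : ∀ k, a < k → k ≤ n → P (k - 1) = P k + v k) :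
    P a = P n + ∑ k ∈ Ioc a n, v k := by
  induction n, han using Nat.le_induction with
  | base => simp
  | succ n han ih =>
    have hlast := hrec (n + 1) (by omega) le_rfl
    rw [Nat.add_sub_cancel] at hlast
    rw [ih fun k hak hkn ↦ hrec k hak (by omega), sum_Ioc_succ_top han, hlast, add_assoc,
      add_comm (v _)]

theorem neg_one_pow_mul_cos_sector_angle {m : ℕ} {β x : ℕ → ℝ}
    (hxodd : ∀ i, 1 ≤ i → i ≤ m → x (2 * i - 1) = β (2 * m - 2 * i + 2))
    (hxeven : ∀ i, 1 ≤ i → i + 1 ≤ m → x (2 * i) = β (2 * m - 2 * i + 1) - π)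
    {k : ℕ} (hk : k ∈ Icc 1 (2 * m - 1)) :
    (-1 : ℝ) ^ (k - 1) * cos (x k) = cos (β (2 * m + 1 - k)) := by
  rw [mem_Icc] at hk
  obtain ⟨i, rfl | rfl⟩ := Nat.even_or_odd' k
  · rw [hxeven i (by omega) (by omega), cos_sub_pi, show 2 * i - 1 = 2 * (i - 1) + 1 by omega,
      show 2 * m + 1 - 2 * i = 2 * m - 2 * i + 1 by omega, pow_succ, pow_mul]
    simp
  · rw [show 2 * i + 1 = 2 * (i + 1) - 1 by omega, hxodd (i + 1) (by omega) (by omega),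
      show 2 * (i + 1) - 1 - 1 = 2 * i by omega,
      show 2 * m + 1 - (2 * (i + 1) - 1) = 2 * m - 2 * (i + 1) + 2 by omega, pow_mul]
    simp

theorem alternating_sum_cos_sector_angle {m : ℕ} {β x : ℕ → ℝ}
    (hxodd : ∀ i, 1 ≤ i → i ≤ m → x (2 * i - 1) = β (2 * m - 2 * i + 2))
    (hxeven : ∀ i, 1 ≤ i → i + 1 ≤ m → x (2 * i) = β (2 * m - 2 * i + 1) - π) :
    ∑ k ∈ Icc 1 (2 * m - 1), (-1 : ℝ) ^ (k - 1) * cos (x k) =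
      ∑ k ∈ Ioc 1 (2 * m), cos (β k) := by
  rw [sum_congr rfl fun k hk ↦ neg_one_pow_mul_cos_sector_angle hxodd hxeven hk]
  refine sum_nbij' (fun k ↦ 2 * m + 1 - k) (fun k ↦ 2 * m + 1 - k) ?_ ?_ ?_ ?_ fun _ _ ↦ rfl <;>
    intro k hk <;> simp only [mem_Icc, mem_Ioc] at hk ⊢ <;> omega

/-- Sector formula for the inradius of a Reuleaux polygon.  Identifying the
plane with `ℂ`, suppose the incircle of radius `r` is centered at the origin,
the contact point `M₁ = (0, −r)` gives the vertex `P₁ = (0, 1−r) = i(1−r)`,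
the contact point `M₂` has polar angle `t = π/2 − u` (so the sector
`[t, π/2]` has length `u`) and `P_{2m} = −(1−r)e^{it}`, and the vertices
satisfy `P_{k−1} = P_k + e^{iβ_k}`.  With the sector angles
`x₁ = β_{2m}, x₂ = α_{2m−2} = β_{2m−1} − π, x₃ = β_{2m−2}, …,
x_{2m−2} = α₂ = β₃ − π, x_{2m−1} = β₂`, one has
`r = 1 − (∑_{k=1}^{2m−1} (−1)^{k−1} cos x_k)/ sin u`. -/
theorem inradius_sector_formula (m : ℕ) (hm : 1 ≤ m) (r u : ℝ)
    (hu0 : 0 < u) (hupi : u < Real.pi)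
    (P : ℕ → ℂ) (β x : ℕ → ℝ)
    (hP1 : P 1 = ((1 - r : ℝ) : ℂ) * Complex.I)
    (hP2m : P (2 * m) = -((1 - r : ℝ) : ℂ) *
      Complex.exp (((Real.pi / 2 - u : ℝ) : ℂ) * Complex.I))
    (hrec : ∀ k, 2 ≤ k → k ≤ 2 * m →
      P (k - 1) = P k + Complex.exp (((β k : ℝ) : ℂ) * Complex.I))
    (hxodd : ∀ i, 1 ≤ i → i ≤ m → x (2 * i - 1) = β (2 * m - 2 * i + 2))
    (hxeven : ∀ i, 1 ≤ i → i + 1 ≤ m → x (2 * i) = β (2 * m - 2 * i + 1) - Real.pi) :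
    r = 1 - (∑ k ∈ Finset.Icc 1 (2 * m - 1), (-1 : ℝ) ^ (k - 1) * Real.cos (x k))
      / Real.sin u := by
  have hsin : 0 < sin u := sin_pos_of_pos_of_lt_pi hu0 hupi
  have htel := eq_add_sum_Ioc_of_pred_eq_add (by omega : 1 ≤ 2 * m) hrec
  rw [hP1, hP2m] at htel
  have hre : 0 = -((1 - r) * sin u) + ∑ k ∈ Ioc 1 (2 * m), cos (β k) := by
    simpa [Complex.re_sum, Complex.exp_ofReal_mul_I_re, cos_pi_div_two_sub,
      -Complex.ofReal_sub, -neg_sub] using congrArg Complex.re htel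
  rw [alternating_sum_cos_sector_angle hxodd hxeven]
  field_simp
  linarith
end

section
/- Let Ω be a Reuleaux polygon of width 1 with inradius r ∈ [1−1/√3, 1/2]. Then the length u of any sector (in the sense of three non-coplanar contact points) satisfies u ≥ 2(√(1−2r) + r(2 arctan(√(4(1−r)² − 1)) − arccos(r/(1−r)))). -/
/-!
Write `g = t 1 - t 0`. If `g ≥ π`, all three contact points would lie in a closed half-plane
through `O`, so `g < π`. A contact point `r u` lies on the unit circle around some vertex `P k`;
as the incircle lies in the unit disc around `P k`, we get `‖P k‖ ≤ 1 - r`, and the equality case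
of the triangle inequality (strict convexity) forces `P k = -(1 - r) u`. Constant width `1` bounds
the diameter of `Ω` by `1`, so the vertices opposite `M 0` and `M 1` give
`2 (1 - r) sin (g / 2) ≤ 1`, i.e. `π - g ≥ 2 arctan √(4 (1 - r)² - 1)`.
With `x = √(1 - 2 r)`, so that `arccos (r / (1 - r)) = 2 arctan x`, the remaining inequality follows
from `arctan y ≥ y - y³ / 3` and a polynomial inequality valid for `x² ≤ 1 / 6`, which is where
`r ≥ 1 - 1 / √3` enters.
-/

open MeasureTheory Metric Real Set

/-- De Giorgi perimeter, realized here as the 1-dimensional Hausdorff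
measure of the topological boundary (they agree for the convex bodies
considered in this paper). -/
noncomputable def perim (E : Set ℂ) : ℝ := (μH[1] (frontier E)).toReal

/-- Planar Lebesgue area. -/
noncomputable def area (E : Set ℂ) : ℝ := (volume E).toReal

/-- The Cheeger constant `h(Ω) = inf_{E ⊆ Ω} P(E)/|E|`. -/
noncomputable def cheeger (Ω : Set ℂ) : ℝ :=
  sInf {q : ℝ | ∃ E : Set ℂ, E ⊆ Ω ∧ MeasurableSet E ∧ 0 < area E ∧ q = perim E / area E}

/-- Support function of a planar set in direction `v`. -/
noncomputable def suppFn (Ω : Set ℂ) (v : ℂ) : ℝ :=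
  sSup ((fun x => v.re * x.re + v.im * x.im) '' Ω)

/-- `Ω` has constant width `w`: in every unit direction, the width equals `w`. -/
def HasConstantWidth (Ω : Set ℂ) (w : ℝ) : Prop :=
  ∀ v : ℂ, ‖v‖ = 1 → suppFn Ω v + suppFn Ω (-v) = w

/-- The inradius of a planar set: supremum of radii of enclosed disks. -/
noncomputable def inradius (Ω : Set ℂ) : ℝ :=
  sSup {r : ℝ | ∃ c : ℂ, Metric.closedBall c r ⊆ Ω}

namespace Real

theorem sub_pow_three_div_three_le_arctan {x : ℝ} (hx : 0 ≤ x) : x - x ^ 3 / 3 ≤ arctan x := by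
  have hderiv (y : ℝ) :
      HasDerivAt (fun y => arctan y - (y - y ^ 3 / 3)) (y ^ 4 / (1 + y ^ 2)) y := by
    refine ((hasDerivAt_arctan y).sub ((hasDerivAt_id y).sub
      ((hasDerivAt_pow 3 y).div_const 3))).congr_deriv ?_
    field_simp
    ring
  have hmono : Monotone fun y => arctan y - (y - y ^ 3 / 3) :=
    monotone_of_deriv_nonneg (fun y => (hderiv y).differentiableAt)
      fun y => (hderiv y).deriv ▸ by positivity
  simpa using hmono hx

theorem arccos_one_sub_sq_div_one_add_sq {x : ℝ} (hx : 0 ≤ x) :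
    arccos ((1 - x ^ 2) / (1 + x ^ 2)) = 2 * arctan x := by
  have hcos : cos (2 * arctan x) = (1 - x ^ 2) / (1 + x ^ 2) := by
    rw [cos_two_mul, cos_sq_arctan]
    field_simp
    ring
  rw [← hcos, arccos_cos]
  · linarith [arctan_nonneg.2 hx]
  · linarith [arctan_lt_pi_div_two x]

theorem two_mul_arctan_sqrt_le_pi_sub {a g : ℝ} (ha : 1 ≤ 2 * a) (hg0 : 0 ≤ g) (hgπ : g ≤ π)
    (hsin : 2 * a * sin (g / 2) ≤ 1) :
    2 * arctan √(4 * a ^ 2 - 1) ≤ π - g := by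
  have ha0 : 0 < a := by linarith
  have harctan : arctan √(4 * a ^ 2 - 1) = π / 2 - arcsin (1 / (2 * a)) := by
    rw [arctan_eq_arccos (sqrt_nonneg _), sq_sqrt (by nlinarith),
      show 1 + (4 * a ^ 2 - 1) = (2 * a) ^ 2 by ring, sqrt_sq (by positivity),
      arccos_eq_pi_div_two_sub_arcsin, one_div]
  have hhalf : g / 2 ≤ arcsin (1 / (2 * a)) := by
    rw [le_arcsin_iff_sin_le' ⟨by linarith [pi_pos], by linarith⟩, le_div_iff₀ (by positivity)]
    linarith
  linarith

end Real

theorem four_sub_sq_le {z : ℝ} (h0 : 0 ≤ z) (h1 : z ≤ 1 / 6) :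
    (4 - z) ^ 2 ≤ (z + 2) * (3 - z * (z + 2)) ^ 2 := by
  nlinarith [mul_nonneg h0 h0, mul_nonneg (mul_nonneg h0 h0) h0,
    mul_nonneg (mul_nonneg (mul_nonneg h0 h0) h0) h0, mul_nonneg h0 (sub_nonneg.2 h1)]

theorem le_sq_mul_arctan_add_one_sub_sq_mul_arctan {x : ℝ} (hx : 0 ≤ x) (hx2 : x ^ 2 ≤ 1 / 6) :
    x ≤ x ^ 2 * arctan √(x ^ 2 * (x ^ 2 + 2)) + (1 - x ^ 2) * arctan x := by
  set v := √(x ^ 2 * (x ^ 2 + 2))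
  have hv : 0 ≤ v := sqrt_nonneg _
  have hv2 : v ^ 2 = x ^ 2 * (x ^ 2 + 2) := sq_sqrt (by positivity)
  -- after the cubic lower bounds on both arctangents, it remains `x (4 - x²) ≤ v (3 - v²)`
  have hpoly : x * (4 - x ^ 2) ≤ v * (3 - v ^ 2) := by
    have hsq : (x * (4 - x ^ 2)) ^ 2 ≤ (v * (3 - v ^ 2)) ^ 2 := by
      rw [mul_pow, mul_pow, hv2, mul_assoc]
      exact mul_le_mul_of_nonneg_left (four_sub_sq_le (by positivity) hx2) (by positivity)
    exact le_of_sq_le_sq hsq (mul_nonneg hv (by nlinarith))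
  have hv3 := mul_le_mul_of_nonneg_left (sub_pow_three_div_three_le_arctan hv) (sq_nonneg x)
  have hx3 := mul_le_mul_of_nonneg_left (sub_pow_three_div_three_le_arctan hx)
    (show 0 ≤ 1 - x ^ 2 by linarith)
  nlinarith

theorem sector_bound_le_two_mul_arctan {r : ℝ} (hlo : 1 - 1 / √3 ≤ r) (hhi : r ≤ 1 / 2) :
    2 * (√(1 - 2 * r) + r * (2 * arctan √(4 * (1 - r) ^ 2 - 1) - arccos (r / (1 - r))))
      ≤ 2 * arctan √(4 * (1 - r) ^ 2 - 1) := by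
  have hsqrt3 : 12 / 7 ≤ √3 := le_sqrt_of_sq_le (by norm_num)
  have hr : 5 / 12 ≤ r := by
    have : 1 / √3 ≤ 7 / 12 := by
      rw [div_le_iff₀ (by positivity)]
      linarith
    linarith
  set x := √(1 - 2 * r)
  have hx0 : 0 ≤ x := sqrt_nonneg _
  have hx2 : x ^ 2 = 1 - 2 * r := sq_sqrt (by linarith)
  have harccos : arccos (r / (1 - r)) = 2 * arctan x := by
    rw [← arccos_one_sub_sq_div_one_add_sq hx0, hx2]
    congr 1
    rw [div_eq_div_iff (by linarith) (by linarith)]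
    ring
  have hv : 4 * (1 - r) ^ 2 - 1 = x ^ 2 * (x ^ 2 + 2) := by rw [hx2]; ring
  have hcore := le_sq_mul_arctan_add_one_sub_sq_mul_arctan hx0 (by linarith)
  rw [harccos, hv]
  linear_combination 2 * hcore + (2 * arctan √(x ^ 2 * (x ^ 2 + 2)) - 2 * arctan x) * hx2

theorem exists_dist_eq_of_mem_frontier_iInter_closedBall {X ι : Type*} [MetricSpace X] [Finite ι]
    {P : ι → X} {R : ℝ} {M : X} (hM : M ∈ frontier (⋂ k, closedBall (P k) R)) :
    ∃ k, dist M (P k) = R := by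
  have hle : ∀ k, dist M (P k) ≤ R := by
    rw [(isClosed_iInter fun k => isClosed_closedBall).frontier_eq] at hM
    exact fun k => mem_iInter.1 hM.1 k
  by_contra! hne
  have hopen : (⋂ k, ball (P k) R) ⊆ interior (⋂ k, closedBall (P k) R) :=
    interior_maximal (iInter_mono fun k => ball_subset_closedBall)
      (isOpen_iInter_of_finite fun k => isOpen_ball)
  exact hM.2 (hopen (mem_iInter.2 fun k => (hle k).lt_of_ne (hne k)))

section StrictConvex

variable {E : Type*} [NormedAddCommGroup E] [NormedSpace ℝ E]

theorem norm_add_le_of_closedBall_zero_subset [Nontrivial E] {P : E} {r R : ℝ} (hr : 0 ≤ r)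
    (h : closedBall (0 : E) r ⊆ closedBall P R) : ‖P‖ + r ≤ R := by
  rcases eq_or_ne P 0 with rfl | hP
  · obtain ⟨q, hq⟩ := exists_norm_eq E hr
    simpa [hq] using h (mem_closedBall_zero_iff.2 hq.le)
  · have hP' : 0 < ‖P‖ := norm_pos_iff.2 hP
    have hq : -(r / ‖P‖) • P ∈ closedBall (0 : E) r := by
      rw [mem_closedBall_zero_iff, norm_smul, norm_neg, norm_div, norm_norm,
        Real.norm_of_nonneg hr, div_mul_cancel₀ _ hP'.ne']
    have hqP : -(r / ‖P‖) • P - P = -(r / ‖P‖ + 1) • P := by module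
    have := mem_closedBall_iff_norm.1 (h hq)
    rwa [hqP, norm_smul, norm_neg, Real.norm_of_nonneg (by positivity), add_mul,
      div_mul_cancel₀ _ hP'.ne', one_mul, add_comm] at this

theorem eq_neg_smul_of_norm_add_le_of_le_dist [StrictConvexSpace ℝ E] {u P : E} {r R : ℝ}
    (hu : ‖u‖ = 1) (hr : 0 < r) (hP : ‖P‖ + r ≤ R) (hd : R ≤ dist (r • u) P) :
    P = -(R - r) • u := by
  have hru : ‖r • u‖ = r := by rw [norm_smul, hu, Real.norm_of_nonneg hr.le, mul_one]
  have hdist : dist (r • u) P ≤ r + ‖P‖ := by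
    simpa only [dist_eq_norm, hru] using norm_sub_le (r • u) P
  have hPR : ‖P‖ = R - r := by linarith
  have hnorm : ‖r • u + -P‖ = ‖r • u‖ + ‖-P‖ := by
    rw [← sub_eq_add_neg, ← dist_eq_norm, hru, norm_neg]
    linarith
  have hray := (sameRay_iff_norm_add.2 hnorm).norm_smul_eq
  rw [hru, norm_neg, hPR, smul_comm] at hray
  rw [neg_smul, ← neg_eq_iff_eq_neg]
  exact smul_right_injective E hr.ne' hray

theorem neg_smul_mem_of_smul_mem_frontier [StrictConvexSpace ℝ E] {ι : Type*} [Finite ι]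
    {P : ι → E} {Ω : Set E} {R r : ℝ} {u : E}
    (hΩ : Ω = ⋂ k, closedBall (P k) R) (hvert : ∀ k, P k ∈ frontier Ω)
    (hball : closedBall 0 r ⊆ Ω) (hr : 0 < r) (hu : ‖u‖ = 1) (hM : r • u ∈ frontier Ω) :
    -(R - r) • u ∈ Ω := by
  have : Nontrivial E := nontrivial_of_ne u 0 (norm_ne_zero_iff.1 (by simp [hu]))
  subst hΩ
  obtain ⟨k, hk⟩ := exists_dist_eq_of_mem_frontier_iInter_closedBall hM
  have hPk := norm_add_le_of_closedBall_zero_subset hr.le (hball.trans (iInter_subset _ k))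
  rw [← eq_neg_smul_of_norm_add_le_of_le_dist hu hr hPk hk.ge]
  exact (isClosed_iInter fun k => isClosed_closedBall).frontier_subset (hvert k)

end StrictConvex

theorem Complex.re_mul_re_add_im_mul_im (v z : ℂ) : v.re * z.re + v.im * z.im = inner ℝ v z := by
  simp only [Complex.inner, Complex.mul_re, Complex.conj_re, Complex.conj_im]
  ring

theorem HasConstantWidth.dist_le {Ω : Set ℂ} {w : ℝ} (hw : HasConstantWidth Ω w)
    (hΩ : IsCompact Ω) {X Y : ℂ} (hX : X ∈ Ω) (hY : Y ∈ Ω) : dist X Y ≤ w := by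
  have inner_le_suppFn (v : ℂ) {Z : ℂ} (hZ : Z ∈ Ω) : inner ℝ v Z ≤ suppFn Ω v := by
    have hcont : Continuous fun x : ℂ => v.re * x.re + v.im * x.im := by fun_prop
    rw [← Complex.re_mul_re_add_im_mul_im]
    exact le_csSup (hΩ.image hcont).bddAbove ⟨Z, hZ, rfl⟩
  obtain ⟨v, hv, hvXY⟩ : ∃ v : ℂ, ‖v‖ = 1 ∧ inner ℝ v (X - Y) = ‖X - Y‖ := by
    rcases eq_or_ne X Y with rfl | hXY
    · exact ⟨1, by simp, by simp⟩
    · refine ⟨‖X - Y‖⁻¹ • (X - Y), norm_smul_inv_norm (sub_ne_zero.2 hXY), ?_⟩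
      rw [real_inner_smul_left, real_inner_self_eq_norm_sq]
      field_simp
  have hX' := inner_le_suppFn v hX
  have hY' := inner_le_suppFn (-v) hY
  rw [inner_sub_right] at hvXY
  rw [inner_neg_left] at hY'
  rw [dist_eq_norm, ← hw v hv]
  linarith

theorem Complex.norm_exp_ofReal_mul_I_sub_exp_ofReal_mul_I (a b : ℝ) :
    ‖exp (b * I) - exp (a * I)‖ = 2 * |Real.sin ((b - a) / 2)| := by
  have : exp (b * I) - exp (a * I) = exp (a * I) * (exp (I * (b - a : ℝ)) - 1) := by
    rw [mul_sub, ← exp_add, mul_one]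
    push_cast
    ring_nf
  rw [this, norm_mul, norm_exp_ofReal_mul_I, one_mul, norm_exp_I_mul_ofReal_sub_one, norm_mul,
    Real.norm_of_nonneg zero_le_two, Real.norm_eq_abs]

theorem exists_halfplane_of_pi_le_sub {r : ℝ} (hr : 0 ≤ r) {t : Fin 3 → ℝ} (h12 : t 1 < t 2)
    (h20 : t 2 < t 0 + 2 * π) (hgap : π ≤ t 1 - t 0) :
    ∃ v : ℂ, v ≠ 0 ∧ ∀ i, 0 ≤ v.re * ((r : ℂ) * Complex.exp (t i * Complex.I)).re
      + v.im * ((r : ℂ) * Complex.exp (t i * Complex.I)).im := by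
  set θ := t 1 + π / 2 with hθ
  have hcos (s : ℝ) : (Complex.exp (θ * Complex.I)).re * ((r : ℂ) * Complex.exp (s * Complex.I)).re
      + (Complex.exp (θ * Complex.I)).im * ((r : ℂ) * Complex.exp (s * Complex.I)).im
      = r * cos (s - θ) := by
    simp only [Complex.exp_ofReal_mul_I_re, Complex.exp_ofReal_mul_I_im, Complex.re_ofReal_mul,
      Complex.im_ofReal_mul, cos_sub]
    ring
  -- all three directions lie, modulo `2π`, in the arc `[t 1, t 1 + π]` centred at `θ`
  have hcos_nonneg {s : ℝ} (hs1 : t 1 ≤ s) (hs2 : s ≤ t 1 + π) : 0 ≤ cos (s - θ) :=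
    cos_nonneg_of_mem_Icc ⟨by linarith, by linarith⟩
  refine ⟨Complex.exp (θ * Complex.I), Complex.exp_ne_zero _, fun i => ?_⟩
  rw [hcos]
  refine mul_nonneg hr ?_
  match i with
  | 0 =>
    rw [← cos_add_two_pi, sub_add_eq_add_sub]
    exact hcos_nonneg (by linarith) (by linarith)
  | 1 => exact hcos_nonneg le_rfl (by linarith [pi_pos])
  | 2 => exact hcos_nonneg h12.le (by linarith)

theorem sector_length_lower_bound_general (N : ℕ)
    (P : Fin (2 * N + 1) → ℂ) (Ω : Set ℂ)
    (hΩ : Ω = ⋂ k, Metric.closedBall (P k) 1)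
    (hvert : ∀ k, P k ∈ frontier Ω)
    (hwidth : HasConstantWidth Ω 1)
    (r : ℝ)
    (hrlo : 1 - 1 / Real.sqrt 3 ≤ r) (hrhi : r ≤ 1 / 2)
    (hball : Metric.closedBall (0 : ℂ) r ⊆ Ω)
    (t : Fin 3 → ℝ) (M : Fin 3 → ℂ)
    (hM : ∀ i, M i = ((r : ℝ) : ℂ) * Complex.exp (((t i : ℝ) : ℂ) * Complex.I))
    (hMfr : ∀ i, M i ∈ frontier Ω)
    (horder : t 0 < t 1 ∧ t 1 < t 2 ∧ t 2 < t 0 + 2 * Real.pi)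
    (hhalf : ¬ ∃ v : ℂ, v ≠ 0 ∧ ∀ i, 0 ≤ v.re * (M i).re + v.im * (M i).im) :
    2 * (Real.sqrt (1 - 2 * r) +
        r * (2 * Real.arctan (Real.sqrt (4 * (1 - r) ^ 2 - 1))
          - Real.arccos (r / (1 - r))))
      ≤ t 0 + Real.pi - t 1 := by
  obtain ⟨h01, h12, h20⟩ := horder
  have hr0 : 0 < r := by
    have : 1 / √3 < 1 := by rw [div_lt_one (by positivity)]; exact lt_sqrt_of_sq_lt (by norm_num)
    linarith
  have hgap : t 1 - t 0 < π := by
    by_contra! hge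
    simp only [hM] at hhalf
    exact hhalf (exists_halfplane_of_pi_le_sub hr0.le h12 h20 hge)
  have hcompact : IsCompact Ω := hΩ ▸ (isCompact_closedBall (P 0) 1).of_isClosed_subset
    (isClosed_iInter fun k => isClosed_closedBall) (iInter_subset _ 0)
  have hopp (i : Fin 3) : -(1 - r) • Complex.exp (t i * Complex.I) ∈ Ω :=
    neg_smul_mem_of_smul_mem_frontier hΩ hvert hball hr0 (Complex.norm_exp_ofReal_mul_I _)
      (by rw [Complex.real_smul, ← hM i]; exact hMfr i)
  have hsin : 2 * (1 - r) * sin ((t 1 - t 0) / 2) ≤ 1 := by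
    have := hwidth.dist_le hcompact (hopp 1) (hopp 0)
    rwa [dist_eq_norm, ← smul_sub, norm_smul, Complex.norm_exp_ofReal_mul_I_sub_exp_ofReal_mul_I,
      norm_neg, Real.norm_of_nonneg (by linarith), abs_of_nonneg
      (sin_nonneg_of_nonneg_of_le_pi (by linarith) (by linarith [pi_pos])), ← mul_assoc,
      mul_comm (1 - r) 2] at this
  linarith [sector_bound_le_two_mul_arctan hrlo hrhi,
    two_mul_arctan_sqrt_le_pi_sub (a := 1 - r) (by linarith) (by linarith) hgap.le hsin]

/-- Let `Ω` be a Reuleaux polygon of width 1 with inradius `r` and incircle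
centered at the origin.  Let `M₀, M₁, M₂` be contact points (boundary points
on the incircle) with polar angles `t₀ < t₁ < t₂ < t₀ + 2π` not contained in
a common closed half-plane through the origin.  Then the length
`u = t₀ + π − t₁` of the corresponding sector satisfies
`u ≥ 2(√(1−2r) + r(2 arctan √(4(1−r)²−1) − arccos(r/(1−r))))`. -/
theorem sector_length_lower_bound (N : ℕ) (hN : 1 ≤ N)
    (P : Fin (2 * N + 1) → ℂ) (Ω : Set ℂ)
    (hΩ : Ω = ⋂ k, Metric.closedBall (P k) 1)
    (hvert : ∀ k, P k ∈ frontier Ω)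
    (hwidth : HasConstantWidth Ω 1)
    (r : ℝ) (hr : r = inradius Ω)
    (hrlo : 1 - 1 / Real.sqrt 3 ≤ r) (hrhi : r ≤ 1 / 2)
    (hball : Metric.closedBall (0 : ℂ) r ⊆ Ω)
    (t : Fin 3 → ℝ) (M : Fin 3 → ℂ)
    (hM : ∀ i, M i = ((r : ℝ) : ℂ) * Complex.exp (((t i : ℝ) : ℂ) * Complex.I))
    (hMfr : ∀ i, M i ∈ frontier Ω)
    (horder : t 0 < t 1 ∧ t 1 < t 2 ∧ t 2 < t 0 + 2 * Real.pi)
    (hhalf : ¬ ∃ v : ℂ, v ≠ 0 ∧ ∀ i, 0 ≤ v.re * (M i).re + v.im * (M i).im) :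
    2 * (Real.sqrt (1 - 2 * r) +
        r * (2 * Real.arctan (Real.sqrt (4 * (1 - r) ^ 2 - 1))
          - Real.arccos (r / (1 - r))))
      ≤ t 0 + Real.pi - t 1 :=
  sector_length_lower_bound_general N P Ω hΩ hvert hwidth r hrlo hrhi hball t M hM hMfr horder hhalf
end
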